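/- arXiv:2503.23504 — 4 statements merged into one kernel-verified Lean document; each statement's English description precedes it below -/
import Mathlib

section
/- Let (X, f_{1,∞}) be a nonautonomous system on a compact metric space, K nonempty, and for k ∈ ℕ let f_{1,∞}^k be the k-th power system with maps g_j = f_{(j-1)k+1}^k, so g_1^j = f_1^{jk}. Then for every s > 0, the upper s-entropy satisfies h̄_K(f_{1,∞}^k, s) ≤ k^s · h̄_K(f_{1,∞}, s), and consequently the upper entropy dimension satisfies D̄_K(f_{1,∞}^k) ≤ D̄_K(f_{1,∞}). -/
/-!
A `(nk, ε)`-spanning set for `f` is an `(n, ε)`-spanning set for the power system `g`, because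
`g_1^j = f_1^{jk}`; hence `r_n(g, K, ε) ≤ r_{nk}(f, K, ε)`. Dividing `log r_{nk}(f, K, ε)` by
`n^s = (nk)^s / k^s` and passing along the subsequence `nk` of the `limsup` gives the factor `k^s`.
In particular `h̄_K(g, s)` vanishes whenever `h̄_K(f, s)` does, which compares the dimensions.
-/

open Filter Set Topology
open scoped ENNReal NNReal

noncomputable section

/-- `comps f i n` is the composition `f_i^n = f_{i+n-1} ∘ ⋯ ∘ f_i` (indices from 1). -/
def comps {X : Type*} (f : ℕ → X → X) (i : ℕ) : ℕ → X → X
  | 0 => id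
  | n + 1 => f (i + n) ∘ comps f i n

/-- Minimal cardinality (in `ℕ∞`) of a subfamily of `U` covering `K`. -/
def coverNumOn {X : Type*} (K : Set X) (U : Set (Set X)) : ℕ∞ :=
  sInf {n : ℕ∞ | ∃ F ⊆ U, F.Finite ∧ (F.ncard : ℕ∞) = n ∧ K ⊆ ⋃₀ F}

/-- `U` is a finite open cover of the whole space. -/
def IsFiniteOpenCover {X : Type*} [TopologicalSpace X] (U : Set (Set X)) : Prop :=
  U.Finite ∧ (∀ u ∈ U, IsOpen u) ∧ ⋃₀ U = Set.univ

/-- Dynamical join `⋁_{j=0}^{n-1} (f_i^j)⁻¹ 𝒰`. -/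
def dynJoin {X : Type*} (f : ℕ → X → X) (i : ℕ) (U : Set (Set X)) (n : ℕ) : Set (Set X) :=
  {V | ∃ c : ℕ → Set X, (∀ j < n, c j ∈ U) ∧ V = ⋂ j ∈ Finset.range n, comps f i j ⁻¹' c j}

/-- Upper `s`-entropy of the system started at time `i` w.r.t. the cover `U`, on `K`. -/
def hCover {X : Type*} (f : ℕ → X → X) (i : ℕ) (K : Set X) (U : Set (Set X)) (s : ℝ) : ℝ≥0∞ :=
  Filter.limsup (fun n : ℕ =>
    ENNReal.ofReal (Real.log ((coverNumOn K (dynJoin f i U n)).toNat)) / (n : ℝ≥0∞) ^ s)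
    Filter.atTop

/-- Upper `s`-entropy: supremum over all finite open covers. -/
def hCoverSup {X : Type*} [TopologicalSpace X] (f : ℕ → X → X) (i : ℕ) (K : Set X) (s : ℝ) :
    ℝ≥0∞ :=
  ⨆ U ∈ {U : Set (Set X) | IsFiniteOpenCover U}, hCover f i K U s

/-- Upper classical topological entropy dimension (cover version), in `ℝ≥0∞`. -/
def DbarCover {X : Type*} [TopologicalSpace X] (f : ℕ → X → X) (i : ℕ) (K : Set X) : ℝ≥0∞ :=
  sInf (ENNReal.ofReal '' {s : ℝ | 0 < s ∧ hCoverSup f i K s = 0})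

section Metric
variable {X : Type*} [PseudoMetricSpace X]

/-- `E` is an `(n,ε)`-spanning set of `K`. -/
def IsSpanningSet (f : ℕ → X → X) (K : Set X) (n : ℕ) (ε : ℝ) (E : Set X) : Prop :=
  ∀ y ∈ K, ∃ x ∈ E, ∀ j < n, dist (comps f 1 j y) (comps f 1 j x) ≤ ε

/-- `F` is an `(n,ε)`-separated subset of `K`. -/
def IsSepSet (f : ℕ → X → X) (K : Set X) (n : ℕ) (ε : ℝ) (F : Set X) : Prop :=
  F ⊆ K ∧ ∀ x ∈ F, ∀ y ∈ F, x ≠ y → ∃ j < n, ε < dist (comps f 1 j x) (comps f 1 j y)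

/-- Minimal cardinality of an `(n,ε)`-spanning set of `K`. -/
def spanNum (f : ℕ → X → X) (K : Set X) (n : ℕ) (ε : ℝ) : ℕ :=
  sInf {m : ℕ | ∃ E : Set X, E.Finite ∧ E.ncard = m ∧ IsSpanningSet f K n ε E}

/-- Maximal cardinality of an `(n,ε)`-separated subset of `K`. -/
def sepNum (f : ℕ → X → X) (K : Set X) (n : ℕ) (ε : ℝ) : ℕ :=
  sSup {m : ℕ | ∃ F : Set X, F.Finite ∧ F.ncard = m ∧ IsSepSet f K n ε F}

/-- Upper `s`-entropy via spanning sets. -/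
def hSpan (f : ℕ → X → X) (K : Set X) (s : ℝ) : ℝ≥0∞ :=
  Filter.limsup (fun ε : ℝ =>
    Filter.limsup
      (fun n : ℕ => ENNReal.ofReal (Real.log (spanNum f K n ε : ℝ)) / (n : ℝ≥0∞) ^ s)
      Filter.atTop) (𝓝[>] (0 : ℝ))

/-- Upper `s`-entropy via separated sets. -/
def hSep (f : ℕ → X → X) (K : Set X) (s : ℝ) : ℝ≥0∞ :=
  Filter.limsup (fun ε : ℝ =>
    Filter.limsup
      (fun n : ℕ => ENNReal.ofReal (Real.log (sepNum f K n ε : ℝ)) / (n : ℝ≥0∞) ^ s)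
      Filter.atTop) (𝓝[>] (0 : ℝ))

/-- Lower `s`-entropy via separated sets. -/
def hSepLow (f : ℕ → X → X) (K : Set X) (s : ℝ) : ℝ≥0∞ :=
  Filter.limsup (fun ε : ℝ =>
    Filter.liminf
      (fun n : ℕ => ENNReal.ofReal (Real.log (sepNum f K n ε : ℝ)) / (n : ℝ≥0∞) ^ s)
      Filter.atTop) (𝓝[>] (0 : ℝ))

/-- Upper entropy dimension (spanning-set version). -/
def DbarSpan (f : ℕ → X → X) (K : Set X) : ℝ≥0∞ :=
  sInf (ENNReal.ofReal '' {s : ℝ | 0 < s ∧ hSpan f K s = 0})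

/-- Upper entropy dimension (separated-set version). -/
def DbarSep (f : ℕ → X → X) (K : Set X) : ℝ≥0∞ :=
  sInf (ENNReal.ofReal '' {s : ℝ | 0 < s ∧ hSep f K s = 0})

/-- Lower entropy dimension (separated-set version). -/
def DlowSep (f : ℕ → X → X) (K : Set X) : ℝ≥0∞ :=
  sInf (ENNReal.ofReal '' {s : ℝ | 0 < s ∧ hSepLow f K s = 0})

/-- Diameter of a cover. -/
def covDiam (U : Set (Set X)) : ℝ≥0∞ := ⨆ u ∈ U, EMetric.diam u

end Metric

section Pesin
variable {X : Type*}

/-- The set `X(𝐔)` determined by a string `p = (m, c)`. -/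
def stringSet (f : ℕ → X → X) (p : ℕ × (ℕ → Set X)) : Set X :=
  ⋂ j ∈ Finset.range p.1, comps f 1 j ⁻¹' p.2 j

/-- `G` is a countable collection of strings over `U` of length `≥ N` covering `K`. -/
def IsStringCover (f : ℕ → X → X) (U : Set (Set X)) (K : Set X) (N : ℕ)
    (G : Set (ℕ × (ℕ → Set X))) : Prop :=
  G.Countable ∧ (∀ p ∈ G, N ≤ p.1 ∧ ∀ j < p.1, p.2 j ∈ U) ∧ K ⊆ ⋃ p ∈ G, stringSet f p

/-- The Carathéodory–Pesin pre-measure `M(f,K,s,𝒰,α,N)`. -/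
def pesinM (f : ℕ → X → X) (K : Set X) (s : ℝ) (U : Set (Set X)) (α : ℝ) (N : ℕ) : ℝ≥0∞ :=
  sInf {t : ℝ≥0∞ | ∃ G : Set (ℕ × (ℕ → Set X)), IsStringCover f U K N G ∧
    t = ∑' p : G, ENNReal.ofReal (Real.exp (-α * (p.1.1 : ℝ) ^ s))}

/-- The Carathéodory–Pesin outer measure `m(f,K,s,𝒰,α) = lim_{N→∞} M(f,K,s,𝒰,α,N)`. -/
def pesinOuter (f : ℕ → X → X) (K : Set X) (s : ℝ) (U : Set (Set X)) (α : ℝ) : ℝ≥0∞ :=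
  ⨆ N : ℕ, pesinM f K s U α N

/-- Critical value `D(f,K,s,𝒰)` where `m(f,K,s,𝒰,·)` jumps from `∞` to `0`. -/
def pesinCrit (f : ℕ → X → X) (K : Set X) (s : ℝ) (U : Set (Set X)) : EReal :=
  sInf ((fun α : ℝ => (α : EReal)) '' {α : ℝ | pesinOuter f K s U α = 0})

/-- The Pesin `s`-topological entropy `D(f,K,s)`. -/
def pesinEnt [TopologicalSpace X] (f : ℕ → X → X) (K : Set X) (s : ℝ) : EReal :=
  ⨆ U ∈ {U : Set (Set X) | IsFiniteOpenCover U}, pesinCrit f K s U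

/-- The Pesin topological entropy dimension `D(f,K)`. -/
def pesinDim [TopologicalSpace X] (f : ℕ → X → X) (K : Set X) : ℝ≥0∞ :=
  sInf (ENNReal.ofReal '' {s : ℝ | 0 < s ∧ pesinEnt f K s = 0})

end Pesin

end

theorem comps_add {X : Type*} (f : ℕ → X → X) (i m n : ℕ) :
    comps f i (m + n) = comps f (i + m) n ∘ comps f i m := by
  induction n with
  | zero => rfl
  | succ n ih =>
    change f (i + (m + n)) ∘ comps f i (m + n) = f (i + m + n) ∘ comps f (i + m) n ∘ comps f i m
    rw [ih, Nat.add_assoc]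

theorem continuous_comps {X : Type*} [TopologicalSpace X] {f : ℕ → X → X}
    (hf : ∀ i, Continuous (f i)) (i n : ℕ) : Continuous (comps f i n) := by
  induction n with
  | zero => exact continuous_id
  | succ n ih => exact (hf _).comp ih

theorem comps_one_eq_comps_one_mul {X : Type*} {f g : ℕ → X → X} {k : ℕ}
    (hg : ∀ j, g (j + 1) = comps f (j * k + 1) k) (j : ℕ) :
    comps g 1 j = comps f 1 (j * k) := by
  induction j with
  | zero => simp [comps]
  | succ j ih =>
    change g (1 + j) ∘ comps g 1 j = comps f 1 ((j + 1) * k)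
    rw [ih, Nat.add_comm 1 j, hg, Nat.succ_mul, comps_add, Nat.add_comm 1]

section Spanning

variable {X : Type*} [PseudoMetricSpace X]

theorem exists_finite_isSpanningSet [CompactSpace X] {f : ℕ → X → X}
    (hf : ∀ i, Continuous (f i)) (K : Set X) (n : ℕ) {ε : ℝ} (hε : 0 < ε) :
    ∃ E : Set X, E.Finite ∧ IsSpanningSet f K n ε E := by
  obtain ⟨t, ht⟩ := isCompact_univ.elim_finite_subcover
    (fun y : X => ⋂ j ∈ Finset.range n, comps f 1 j ⁻¹' Metric.ball (comps f 1 j y) ε)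
    (fun y => isOpen_biInter_finset fun j _ =>
      Metric.isOpen_ball.preimage (continuous_comps hf 1 j))
    (fun x _ => mem_iUnion.2 ⟨x, mem_iInter₂.2 fun j _ => Metric.mem_ball_self hε⟩)
  refine ⟨t, t.finite_toSet, fun y _ => ?_⟩
  obtain ⟨x, hxt, hxy⟩ := mem_iUnion₂.1 (ht (mem_univ y))
  exact ⟨x, hxt, fun j hj => (mem_iInter₂.1 hxy j (Finset.mem_range.2 hj)).le⟩

theorem IsSpanningSet.of_comps_mul {f g : ℕ → X → X} {k : ℕ} (hk : 0 < k)
    (hgf : ∀ j, comps g 1 j = comps f 1 (j * k)) {K : Set X} {n : ℕ} {ε : ℝ} {E : Set X}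
    (hE : IsSpanningSet f K (n * k) ε E) : IsSpanningSet g K n ε E := by
  intro y hy
  obtain ⟨x, hxE, hxy⟩ := hE y hy
  exact ⟨x, hxE, fun j hj => hgf j ▸ hxy (j * k) (Nat.mul_lt_mul_of_pos_right hj hk)⟩

theorem spanNum_le_spanNum_mul [CompactSpace X] {f g : ℕ → X → X}
    (hf : ∀ i, Continuous (f i)) {k : ℕ} (hk : 0 < k)
    (hgf : ∀ j, comps g 1 j = comps f 1 (j * k)) (K : Set X) {ε : ℝ} (hε : 0 < ε) (n : ℕ) :
    spanNum g K n ε ≤ spanNum f K (n * k) ε := by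
  obtain ⟨E, hEfin, hEcard, hEspan⟩ := Nat.sInf_mem (s := {m : ℕ | ∃ E : Set X, E.Finite ∧
      E.ncard = m ∧ IsSpanningSet f K (n * k) ε E}) <| by
    obtain ⟨E, hEfin, hEspan⟩ := exists_finite_isSpanningSet hf K (n * k) hε
    exact ⟨E.ncard, E, hEfin, rfl, hEspan⟩
  exact Nat.sInf_le ⟨E, hEfin, hEcard, hEspan.of_comps_mul hk hgf⟩

end Spanning

theorem ENNReal.limsup_comp_mul_div_rpow_le (a : ℕ → ℝ≥0∞) {k : ℕ} (hk : 0 < k) {s : ℝ}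
    (hs : 0 ≤ s) :
    limsup (fun n : ℕ => a (n * k) / (n : ℝ≥0∞) ^ s) atTop
      ≤ (k : ℝ≥0∞) ^ s * limsup (fun n : ℕ => a n / (n : ℝ≥0∞) ^ s) atTop := by
  set u : ℕ → ℝ≥0∞ := fun n => a n / (n : ℝ≥0∞) ^ s
  have hc0 : (k : ℝ≥0∞) ^ s ≠ 0 := (ENNReal.rpow_pos (by exact_mod_cast hk) (by simp)).ne'
  have hcT : (k : ℝ≥0∞) ^ s ≠ ⊤ := ENNReal.rpow_ne_top_of_nonneg hs (by simp)
  have hscale :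
      (fun n : ℕ => a (n * k) / (n : ℝ≥0∞) ^ s) = fun n => (k : ℝ≥0∞) ^ s * u (n * k) := by
    funext n
    simp only [u, Nat.cast_mul, ENNReal.mul_rpow_of_nonneg _ _ hs]
    rw [mul_comm ((n : ℝ≥0∞) ^ s), ← mul_div_assoc, ENNReal.mul_div_mul_left _ _ hc0 hcT]
  have hsub : limsup (fun n => u (n * k)) atTop ≤ limsup u atTop := by
    change limsup (u ∘ (· * k)) atTop ≤ _
    rw [limsup_comp u (· * k) atTop]
    exact limsup_le_limsup_of_le (tendsto_id.atTop_mul_const' hk)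
  rw [hscale, ENNReal.limsup_const_mul_of_ne_top hcT]
  exact mul_le_mul_right hsub _

section Entropy

variable {X : Type*} [PseudoMetricSpace X]

theorem hSpan_le_rpow_mul_of_spanNum_le {f g : ℕ → X → X} {K : Set X} {k : ℕ} (hk : 0 < k)
    {s : ℝ} (hs : 0 ≤ s) (hspan : ∀ ε > 0, ∀ n, spanNum g K n ε ≤ spanNum f K (n * k) ε) :
    hSpan g K s ≤ (k : ℝ≥0∞) ^ s * hSpan f K s := by
  have hcT : (k : ℝ≥0∞) ^ s ≠ ⊤ := ENNReal.rpow_ne_top_of_nonneg hs (by simp)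
  rw [hSpan, hSpan, ← ENNReal.limsup_const_mul_of_ne_top hcT]
  refine limsup_le_limsup ?_
  filter_upwards [self_mem_nhdsWithin] with ε hε
  refine le_trans (limsup_le_limsup (Eventually.of_forall fun n => ?_))
    (ENNReal.limsup_comp_mul_div_rpow_le _ hk hs)
  refine ENNReal.div_le_div_right (ENNReal.ofReal_le_ofReal ?_) _
  rcases (spanNum g K n ε).eq_zero_or_pos with h0 | hpos
  · simpa [h0] using Real.log_natCast_nonneg _
  · exact Real.log_le_log (by exact_mod_cast hpos) (by exact_mod_cast hspan ε hε n)

theorem DbarSpan_le_of_hSpan_eq_zero {f g : ℕ → X → X} {K : Set X}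
    (h : ∀ s, 0 < s → hSpan f K s = 0 → hSpan g K s = 0) : DbarSpan g K ≤ DbarSpan f K :=
  sInf_le_sInf <| image_mono fun s ⟨hs, h0⟩ => ⟨hs, h s hs h0⟩

end Entropy

theorem power_rule_le_general {X : Type*} [MetricSpace X] [CompactSpace X] (f : ℕ → X → X)
    (hf : ∀ i, Continuous (f i)) (K : Set X) (k : ℕ) (hk : 1 ≤ k)
    (g : ℕ → X → X) (hg : ∀ j, g j = comps f ((j - 1) * k + 1) k) :
    (∀ s : ℝ, 0 < s → hSpan g K s ≤ (k : ℝ≥0∞) ^ s * hSpan f K s) ∧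
      DbarSpan g K ≤ DbarSpan f K := by
  have hgf : ∀ j, comps g 1 j = comps f 1 (j * k) :=
    comps_one_eq_comps_one_mul fun j => by simpa using hg (j + 1)
  have hent : ∀ s : ℝ, 0 < s → hSpan g K s ≤ (k : ℝ≥0∞) ^ s * hSpan f K s := fun s hs =>
    hSpan_le_rpow_mul_of_spanNum_le hk hs.le fun ε hε n =>
      spanNum_le_spanNum_mul hf hk hgf K hε n
  refine ⟨hent, DbarSpan_le_of_hSpan_eq_zero fun s hs h0 => ?_⟩
  simpa [h0] using hent s hs

/-- Power rule (inequality): `h̄_K(f^k, s) ≤ kˢ h̄_K(f,s)` and `D̄_K(f^k) ≤ D̄_K(f)`. -/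
theorem power_rule_le {X : Type*} [MetricSpace X] [CompactSpace X] (f : ℕ → X → X)
    (hf : ∀ i, Continuous (f i)) (K : Set X) (hK : K.Nonempty) (k : ℕ) (hk : 1 ≤ k)
    (g : ℕ → X → X) (hg : ∀ j, g j = comps f ((j - 1) * k + 1) k) :
    (∀ s : ℝ, 0 < s → hSpan g K s ≤ (k : ℝ≥0∞) ^ s * hSpan f K s) ∧
      DbarSpan g K ≤ DbarSpan f K :=
  power_rule_le_general f hf K k hk g hg
end

section
/- Let a : ℕ → ℝ≥0 be nondecreasing and k ∈ ℕ with k ≥ 1. Then for every s > 0, limsup_{n→∞} a(kn)/n^s = k^s · limsup_{n→∞} a(n)/n^s. -/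
open Filter Set Topology
open scoped ENNReal NNReal

/-! Writing `a (k * n) / n ^ s = k ^ s * (a (k * n) / (k * n) ^ s)`, it suffices that `a n / n ^ s`
and its subsequence along the multiples of `k` have the same limsup. A subsequence never has a
larger limsup; conversely, monotonicity lets us replace `n` by the next multiple `k * m` of `k`,
at the cost of a factor `(k * m / n) ^ s ≤ (1 + k / n) ^ s`, which tends to `1`. -/

namespace ENNReal

theorem limsup_le_limsup_of_le_mul_of_tendsto_one {α : Type*} {f : Filter α} {u v r : α → ℝ≥0∞}
    (hr : Tendsto r f (𝓝 1)) (h : u ≤ᶠ[f] v * r) : limsup u f ≤ limsup v f := by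
  rcases f.eq_or_neBot with rfl | _
  · simp
  calc limsup u f ≤ limsup (v * r) f := limsup_le_limsup h
    _ ≤ limsup v f * limsup r f :=
      limsup_mul_le' (Or.inr (by simp [hr.limsup_eq])) (Or.inr (by simp [hr.limsup_eq]))
    _ = limsup v f := by rw [hr.limsup_eq, mul_one]

theorem tendsto_one_add_const_div_natCast_rpow {c : ℝ≥0∞} (hc : c ≠ ∞) (s : ℝ) :
    Tendsto (fun n : ℕ => (1 + c / n) ^ s) atTop (𝓝 1) := by
  have hdiv : Tendsto (fun n : ℕ => c / n) atTop (𝓝 0) := by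
    simpa using Tendsto.const_div (a := c) tendsto_nat_nhds_top (Or.inr hc)
  have hsum : Tendsto (fun n : ℕ => 1 + c / n) atTop (𝓝 1) := by simpa using hdiv.const_add 1
  simpa using hsum.ennrpow_const s

theorem div_natCast_rpow_eq_rpow_mul (x : ℝ≥0∞) {k : ℕ} (hk : k ≠ 0) {s : ℝ} (hs : 0 ≤ s)
    (n : ℕ) : x / (n : ℝ≥0∞) ^ s = (k : ℝ≥0∞) ^ s * (x / ((k * n : ℕ) : ℝ≥0∞) ^ s) := by
  have hk0 : (k : ℝ≥0∞) ^ s ≠ 0 := by simp [rpow_eq_zero_iff, hk]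
  have hkT : (k : ℝ≥0∞) ^ s ≠ ∞ := by simp [rpow_eq_top_iff, hk]
  rw [Nat.cast_mul, mul_rpow_of_nonneg _ _ hs, ← mul_div_assoc,
    ENNReal.mul_div_mul_left _ _ hk0 hkT]

end ENNReal

theorem Monotone.limsup_div_natCast_rpow_le_limsup_mul {a : ℕ → ℝ≥0∞} (ha : Monotone a) {k : ℕ}
    (hk : k ≠ 0) {s : ℝ} (hs : 0 ≤ s) :
    limsup (fun n : ℕ => a n / (n : ℝ≥0∞) ^ s) atTop ≤
      limsup (fun m : ℕ => a (k * m) / ((k * m : ℕ) : ℝ≥0∞) ^ s) atTop := by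
  set G := fun m : ℕ => a (k * m) / ((k * m : ℕ) : ℝ≥0∞) ^ s
  set φ : ℕ → ℕ := fun n => n / k + 1
  have hφ_lower (n : ℕ) : n ≤ k * φ n := (Nat.lt_mul_div_succ n (Nat.pos_of_ne_zero hk)).le
  have hφ_upper (n : ℕ) : k * φ n ≤ n + k := by
    simpa [φ, mul_add] using Nat.mul_div_le n k
  have hφ : Tendsto φ atTop atTop :=
    tendsto_atTop_mono (fun n => Nat.le_succ _) (Nat.tendsto_div_const_atTop hk)
  have hbound : ∀ᶠ n : ℕ in atTop,
      a n / (n : ℝ≥0∞) ^ s ≤ (G ∘ φ) n * (1 + (k : ℝ≥0∞) / n) ^ s := by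
    filter_upwards [eventually_ne_atTop 0] with n hn
    have hm0 : ((k * φ n : ℕ) : ℝ≥0∞) ^ s ≠ 0 :=
      (ENNReal.rpow_pos (Nat.cast_pos.2 (Nat.mul_pos (Nat.pos_of_ne_zero hk) (Nat.succ_pos _)))
        (ENNReal.natCast_ne_top _)).ne'
    have hmT : ((k * φ n : ℕ) : ℝ≥0∞) ^ s ≠ ∞ :=
      ENNReal.rpow_ne_top_of_nonneg hs (ENNReal.natCast_ne_top _)
    have hratio : ((k * φ n : ℕ) : ℝ≥0∞) / n ≤ 1 + (k : ℝ≥0∞) / n := by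
      rw [← ENNReal.div_self (Nat.cast_ne_zero.2 hn) (ENNReal.natCast_ne_top n),
        ← ENNReal.add_div]
      gcongr
      exact_mod_cast hφ_upper n
    calc a n / (n : ℝ≥0∞) ^ s ≤ a (k * φ n) / (n : ℝ≥0∞) ^ s := by gcongr; exact ha (hφ_lower n)
      _ = G (φ n) * (((k * φ n : ℕ) : ℝ≥0∞) / n) ^ s := by
        rw [ENNReal.div_rpow_of_nonneg _ _ hs, ← mul_div_assoc, ENNReal.div_mul_cancel hm0 hmT]
      _ ≤ G (φ n) * (1 + (k : ℝ≥0∞) / n) ^ s := by gcongr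
  calc limsup (fun n : ℕ => a n / (n : ℝ≥0∞) ^ s) atTop ≤ limsup (G ∘ φ) atTop :=
        ENNReal.limsup_le_limsup_of_le_mul_of_tendsto_one
          (ENNReal.tendsto_one_add_const_div_natCast_rpow (ENNReal.natCast_ne_top k) s) hbound
    _ ≤ limsup G atTop := hφ.limsup_comp_le_limsup

/-- For a nondecreasing sequence, `limsup a(kn)/nˢ = kˢ · limsup a(n)/nˢ`. -/
theorem limsup_subseq_rpow (a : ℕ → NNReal) (ha : Monotone a) (k : ℕ) (hk : 1 ≤ k)
    (s : ℝ) (hs : 0 < s) :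
    Filter.limsup (fun n : ℕ => (a (k * n) : ℝ≥0∞) / (n : ℝ≥0∞) ^ s) Filter.atTop =
      (k : ℝ≥0∞) ^ s *
        Filter.limsup (fun n : ℕ => (a n : ℝ≥0∞) / (n : ℝ≥0∞) ^ s) Filter.atTop := by
  have hk0 : k ≠ 0 := Nat.one_le_iff_ne_zero.1 hk
  have hkT : (k : ℝ≥0∞) ^ s ≠ ∞ := ENNReal.rpow_ne_top_of_nonneg hs.le (ENNReal.natCast_ne_top k)
  have hrescale : (fun n : ℕ => (a (k * n) : ℝ≥0∞) / (n : ℝ≥0∞) ^ s) =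
      fun n => (k : ℝ≥0∞) ^ s * ((a (k * n) : ℝ≥0∞) / ((k * n : ℕ) : ℝ≥0∞) ^ s) :=
    funext fun n => ENNReal.div_natCast_rpow_eq_rpow_mul _ hk0 hs.le n
  rw [hrescale, ENNReal.limsup_const_mul_of_ne_top hkT]
  congr 1
  apply le_antisymm
  · exact (tendsto_id.const_mul_atTop' (Nat.pos_of_ne_zero hk0)).limsup_comp_le_limsup
      (u := fun n : ℕ => (a n : ℝ≥0∞) / (n : ℝ≥0∞) ^ s)
  · exact Monotone.limsup_div_natCast_rpow_le_limsup_mul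
      (fun m n h => ENNReal.coe_le_coe.2 (ha h)) hk0 hs.le
end

section
/- Let (X, f_{1,∞}) be a nonautonomous system and K a nonempty f_{1,∞}-invariant subset (f_i⁻¹(K) = K for all i ≥ 1). Then for any 1 ≤ i ≤ j, the upper entropy dimensions of the shifted systems satisfy D̄_K(f_{i,∞}) ≤ D̄_K(f_{j,∞}), where f_{i,∞} = {f_i, f_{i+1}, …}. More precisely, for every s > 0, h̄_K(f_{i,∞}, s) ≤ h̄_K(f_{i+1,∞}, s). -/
open Filter Set Topology
open scoped ENNReal NNReal

/-!
Writing `𝒰ᵢⁿ` for `dynJoin f i 𝒰 n` and `N_K` for `coverNumOn K`, the dynamical join satisfies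
`𝒰ᵢⁿ⁺¹ = 𝒰 ⊼ fᵢ⁻¹(𝒰ᵢ₊₁ⁿ)`. Since `fᵢ` maps `K` into `K`, a subcover of `fᵢ⁻¹(𝒰ᵢ₊₁ⁿ)` for `K` is
pulled back from one of `𝒰ᵢ₊₁ⁿ`, so `N_K(𝒰ᵢⁿ⁺¹) ≤ N_K(𝒰) · N_K(𝒰ᵢ₊₁ⁿ)`. After taking logarithms
the constant `log N_K(𝒰)` disappears when divided by `n ^ s`, and the index shift `n ↦ n + 1` does
not change the upper limit. All cover numbers are finite because `𝒰ᵢⁿ` is itself a finite cover,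
so the truncation `ℕ∞ → ℕ` in `hCover` is harmless.
-/

open scoped SetFamily

section CoverNumber

variable {X Y : Type*} {K : Set X} {A B : Set (Set X)}

lemma Set.ncard_image2_le {α β γ : Type*} (g : α → β → γ) {s : Set α} {t : Set β}
    (hs : s.Finite) (ht : t.Finite) : (image2 g s t).ncard ≤ s.ncard * t.ncard := by
  rw [← image_prod, ← ncard_prod]
  exact ncard_image_le (hs.prod ht)

lemma subset_sUnion_preimage_image {g : X → Y} {L : Set Y} {C : Set (Set Y)} (hg : MapsTo g K L)
    (hL : L ⊆ ⋃₀ C) : K ⊆ ⋃₀ (preimage g '' C) := by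
  intro x hx
  obtain ⟨v, hv, hgx⟩ := hL (hg hx)
  exact ⟨g ⁻¹' v, mem_image_of_mem _ hv, hgx⟩

lemma coverNumOn_le_ncard {F : Set (Set X)} (hFA : F ⊆ A) (hF : F.Finite) (hKF : K ⊆ ⋃₀ F) :
    coverNumOn K A ≤ F.ncard :=
  sInf_le ⟨F, hFA, hF, rfl, hKF⟩

lemma coverNumOn_ne_top (hA : A.Finite) (hKA : K ⊆ ⋃₀ A) : coverNumOn K A ≠ ⊤ :=
  ne_top_of_le_ne_top (ENat.natCast_ne_top _) (coverNumOn_le_ncard subset_rfl hA hKA)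

lemma exists_ncard_eq_coverNumOn (hA : A.Finite) (hKA : K ⊆ ⋃₀ A) :
    ∃ F ⊆ A, F.Finite ∧ K ⊆ ⋃₀ F ∧ (F.ncard : ℕ∞) = coverNumOn K A := by
  obtain ⟨F, hFA, hF, hcard, hKF⟩ :=
    csInf_mem (s := {n : ℕ∞ | ∃ F ⊆ A, F.Finite ∧ (F.ncard : ℕ∞) = n ∧ K ⊆ ⋃₀ F})
      ⟨_, A, subset_rfl, hA, rfl, hKA⟩
  exact ⟨F, hFA, hF, hKF, hcard⟩

lemma coverNumOn_infs_le (hA : A.Finite) (hKA : K ⊆ ⋃₀ A) (hB : B.Finite) (hKB : K ⊆ ⋃₀ B) :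
    coverNumOn K (A ⊼ B) ≤ coverNumOn K A * coverNumOn K B := by
  obtain ⟨F, hFA, hF, hKF, hFcard⟩ := exists_ncard_eq_coverNumOn hA hKA
  obtain ⟨G, hGB, hG, hKG, hGcard⟩ := exists_ncard_eq_coverNumOn hB hKB
  rw [← hFcard, ← hGcard, ← Nat.cast_mul]
  refine (coverNumOn_le_ncard (infs_subset hFA hGB) (hF.image2 _ hG) fun x hx => ?_).trans
    (by exact_mod_cast Set.ncard_image2_le _ hF hG)
  obtain ⟨u, hu, hxu⟩ := hKF hx
  obtain ⟨v, hv, hxv⟩ := hKG hx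
  exact ⟨u ⊓ v, inf_mem_infs hu hv, hxu, hxv⟩

lemma coverNumOn_preimage_image_le {g : X → Y} {L : Set Y} {C : Set (Set Y)} (hg : MapsTo g K L)
    (hC : C.Finite) (hLC : L ⊆ ⋃₀ C) : coverNumOn K (preimage g '' C) ≤ coverNumOn L C := by
  obtain ⟨G, hGC, hG, hLG, hGcard⟩ := exists_ncard_eq_coverNumOn hC hLC
  rw [← hGcard]
  exact (coverNumOn_le_ncard (image_mono hGC) (hG.image _)
    (subset_sUnion_preimage_image hg hLG)).trans (by exact_mod_cast ncard_image_le hG)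

end CoverNumber

section DynJoin

variable {X : Type*} (f : ℕ → X → X) (U : Set (Set X))

lemma comps_succ (i n : ℕ) : comps f i (n + 1) = comps f (i + 1) n ∘ f i := by
  induction n with
  | zero => rfl
  | succ n ih =>
    change f (i + (n + 1)) ∘ comps f i (n + 1) = f (i + 1 + n) ∘ comps f (i + 1) n ∘ f i
    rw [ih, Nat.add_right_comm i 1 n, Nat.add_assoc]

lemma dynJoin_zero (i : ℕ) : dynJoin f i U 0 = {univ} := by
  ext V
  simp [dynJoin]

lemma iInter_range_succ_preimage_comps (c : ℕ → Set X) (i n : ℕ) :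
    ⋂ j ∈ Finset.range (n + 1), comps f i j ⁻¹' c j =
      c 0 ⊓ f i ⁻¹' ⋂ j ∈ Finset.range n, comps f (i + 1) j ⁻¹' c (j + 1) := by
  ext x
  simp only [mem_iInter, Finset.mem_range, mem_preimage, inf_eq_inter, mem_inter_iff,
    Nat.forall_lt_succ_left, comps_succ, Function.comp_apply]
  rfl

lemma dynJoin_succ (i n : ℕ) :
    dynJoin f i U (n + 1) = U ⊼ (preimage (f i) '' dynJoin f (i + 1) U n) := by
  ext V
  constructor
  · rintro ⟨c, hc, rfl⟩
    refine ⟨c 0, hc 0 n.succ_pos, _, ⟨_, ⟨fun j => c (j + 1), fun j hj => hc _ (by omega), rfl⟩,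
      rfl⟩, (iInter_range_succ_preimage_comps f c i n).symm⟩
  · rintro ⟨u, hu, _, ⟨_, ⟨d, hd, rfl⟩, rfl⟩, rfl⟩
    refine ⟨fun j => Nat.casesOn j u d, fun j hj => ?_,
      (iInter_range_succ_preimage_comps f (fun j => Nat.casesOn j u d) i n).symm⟩
    cases j with
    | zero => exact hu
    | succ j => exact hd j (by omega)

lemma dynJoin_finite (hU : U.Finite) (i n : ℕ) : (dynJoin f i U n).Finite := by
  induction n generalizing i with
  | zero => simp [dynJoin_zero]
  | succ n ih => rw [dynJoin_succ]; exact hU.image2 _ ((ih (i + 1)).image _)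

lemma sUnion_dynJoin (hU : ⋃₀ U = univ) (i n : ℕ) : ⋃₀ dynJoin f i U n = univ := by
  induction n generalizing i with
  | zero => simp [dynJoin_zero]
  | succ n ih =>
    refine eq_univ_of_forall fun x => ?_
    obtain ⟨u, hu, hxu⟩ := hU.symm ▸ mem_univ x
    obtain ⟨W, hW, hxW⟩ := subset_sUnion_preimage_image (mapsTo_univ (f i) univ)
      (ih (i + 1)).symm.subset (mem_univ x)
    rw [dynJoin_succ]
    exact ⟨u ⊓ W, inf_mem_infs hu hW, hxu, hxW⟩

lemma coverNumOn_dynJoin_succ_le (hUfin : U.Finite) (hUcov : ⋃₀ U = univ) {K : Set X} {i : ℕ}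
    (hK : MapsTo (f i) K K) (n : ℕ) :
    coverNumOn K (dynJoin f i U (n + 1)) ≤
      coverNumOn K U * coverNumOn K (dynJoin f (i + 1) U n) := by
  have hfin := dynJoin_finite f U hUfin (i + 1) n
  have hcov : K ⊆ ⋃₀ dynJoin f (i + 1) U n := by
    rw [sUnion_dynJoin f U hUcov]
    exact subset_univ K
  rw [dynJoin_succ]
  calc _ ≤ coverNumOn K U * coverNumOn K (preimage (f i) '' dynJoin f (i + 1) U n) :=
        coverNumOn_infs_le hUfin (hUcov ▸ subset_univ K) (hfin.image _)
          (subset_sUnion_preimage_image hK hcov)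
    _ ≤ _ := by gcongr; exact coverNumOn_preimage_image_le hK hfin hcov

end DynJoin

section GrowthRate

open Filter

lemma log_natCast_le_log_add_log_of_le_mul {a b c : ℕ} (h : a ≤ b * c) :
    Real.log a ≤ Real.log b + Real.log c := by
  rcases Nat.eq_zero_or_pos a with rfl | ha
  · simpa using add_nonneg (Real.log_natCast_nonneg b) (Real.log_natCast_nonneg c)
  obtain ⟨hb, hc⟩ := mul_ne_zero_iff.1 (ha.trans_le h).ne'
  rw [← Real.log_mul (by exact_mod_cast hb) (by exact_mod_cast hc)]
  exact Real.log_le_log (by exact_mod_cast ha) (by exact_mod_cast h)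

lemma tendsto_const_div_natCast_rpow_atTop {C : ℝ≥0∞} (hC : C ≠ ⊤) {s : ℝ} (hs : 0 < s) :
    Tendsto (fun n : ℕ => C / (n : ℝ≥0∞) ^ s) atTop (𝓝 0) := by
  have hpow : Tendsto (fun n : ℕ => (n : ℝ≥0∞) ^ s) atTop (𝓝 ⊤) := by
    have := (ENNReal.continuous_rpow_const (y := s)).tendsto ⊤
    rw [ENNReal.top_rpow_of_pos hs] at this
    exact this.comp ENNReal.tendsto_nat_nhds_top
  simpa using ENNReal.Tendsto.const_div hpow (Or.inr hC)

lemma limsup_log_div_rpow_le_of_le_mul {a b : ℕ → ℕ} {c : ℕ} {s : ℝ} (hs : 0 < s)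
    (h : ∀ n, a (n + 1) ≤ c * b n) :
    limsup (fun n : ℕ => ENNReal.ofReal (Real.log (a n)) / (n : ℝ≥0∞) ^ s) atTop ≤
      limsup (fun n : ℕ => ENNReal.ofReal (Real.log (b n)) / (n : ℝ≥0∞) ^ s) atTop := by
  set C := ENNReal.ofReal (Real.log c)
  have hpoint : ∀ n : ℕ, ENNReal.ofReal (Real.log (a (n + 1))) / ((n + 1 : ℕ) : ℝ≥0∞) ^ s ≤
      C / ((n + 1 : ℕ) : ℝ≥0∞) ^ s + ENNReal.ofReal (Real.log (b n)) / (n : ℝ≥0∞) ^ s := by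
    intro n
    calc _ ≤ (C + ENNReal.ofReal (Real.log (b n))) / ((n + 1 : ℕ) : ℝ≥0∞) ^ s := by
          gcongr
          exact (ENNReal.ofReal_le_ofReal (log_natCast_le_log_add_log_of_le_mul (h n))).trans
            ENNReal.ofReal_add_le
      _ ≤ _ := by
          rw [ENNReal.add_div]
          gcongr
          exact_mod_cast n.le_succ
  have hC : Tendsto (fun n : ℕ => C / ((n + 1 : ℕ) : ℝ≥0∞) ^ s) atTop (𝓝 0) :=
    (tendsto_const_div_natCast_rpow_atTop ENNReal.ofReal_ne_top hs).comp
      (tendsto_add_atTop_nat 1)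
  rw [← limsup_nat_add _ 1]
  calc _ ≤ limsup ((fun n : ℕ => C / ((n + 1 : ℕ) : ℝ≥0∞) ^ s) +
        fun n => ENNReal.ofReal (Real.log (b n)) / (n : ℝ≥0∞) ^ s) atTop :=
        limsup_le_limsup (Eventually.of_forall hpoint)
    _ = _ := ENNReal.limsup_add_of_left_tendsto_zero hC _

end GrowthRate

section Entropy

variable {X : Type*} (f : ℕ → X → X) {K : Set X} {i : ℕ} {s : ℝ}

lemma hCover_le_hCover_succ {U : Set (Set X)} (hUfin : U.Finite) (hUcov : ⋃₀ U = univ)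
    (hK : MapsTo (f i) K K) (hs : 0 < s) : hCover f i K U s ≤ hCover f (i + 1) K U s := by
  refine limsup_log_div_rpow_le_of_le_mul (c := (coverNumOn K U).toNat) hs fun n => ?_
  rw [← ENat.toNat_mul]
  refine ENat.toNat_le_toNat (coverNumOn_dynJoin_succ_le f U hUfin hUcov hK n)
    (WithTop.mul_ne_top (coverNumOn_ne_top hUfin (hUcov ▸ subset_univ K)) ?_)
  exact coverNumOn_ne_top (dynJoin_finite f U hUfin _ n)
    (sUnion_dynJoin f U hUcov _ n ▸ subset_univ K)

variable [TopologicalSpace X]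

lemma hCoverSup_le_hCoverSup_succ (hK : MapsTo (f i) K K) (hs : 0 < s) :
    hCoverSup f i K s ≤ hCoverSup f (i + 1) K s :=
  iSup₂_mono fun _ hU => hCover_le_hCover_succ f hU.1 hU.2.2 hK hs

lemma DbarCover_le_of_hCoverSup_le {j : ℕ}
    (h : ∀ s : ℝ, 0 < s → hCoverSup f i K s ≤ hCoverSup f j K s) :
    DbarCover f i K ≤ DbarCover f j K := by
  refine sInf_le_sInf (image_mono fun s ⟨hs, hzero⟩ => ⟨hs, ?_⟩)
  exact le_antisymm (hzero ▸ h s hs) bot_le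

end Entropy

theorem shifted_systems_mono_general {X : Type*} [TopologicalSpace X] (f : ℕ → X → X)
    (K : Set X) (hinv : ∀ i, 1 ≤ i → f i ⁻¹' K = K) :
    (∀ i, 1 ≤ i → ∀ s : ℝ, 0 < s → hCoverSup f i K s ≤ hCoverSup f (i + 1) K s) ∧
      ∀ i j, 1 ≤ i → i ≤ j → DbarCover f i K ≤ DbarCover f j K := by
  have step (i : ℕ) (hi : 1 ≤ i) (s : ℝ) (hs : 0 < s) :
      hCoverSup f i K s ≤ hCoverSup f (i + 1) K s :=
    hCoverSup_le_hCoverSup_succ f (by simpa only [hinv i hi] using mapsTo_preimage (f i) K)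
      hs
  refine ⟨step, fun i j hi hij => DbarCover_le_of_hCoverSup_le f fun s hs => ?_⟩
  induction j, hij using Nat.le_induction with
  | base => exact le_rfl
  | succ k hk ih => exact ih.trans (step k (hi.trans hk) s hs)

/-- Monotonicity of shifted systems on an invariant set:
`h̄_K(f_{i,∞},s) ≤ h̄_K(f_{i+1,∞},s)` and `D̄_K(f_{i,∞}) ≤ D̄_K(f_{j,∞})` for `i ≤ j`. -/
theorem shifted_systems_mono {X : Type*} [TopologicalSpace X] [CompactSpace X] (f : ℕ → X → X)
    (hf : ∀ i, Continuous (f i)) (K : Set X) (hK : K.Nonempty)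
    (hinv : ∀ i, 1 ≤ i → f i ⁻¹' K = K) :
    (∀ i, 1 ≤ i → ∀ s : ℝ, 0 < s → hCoverSup f i K s ≤ hCoverSup f (i + 1) K s) ∧
      ∀ i j, 1 ≤ i → i ≤ j → DbarCover f i K ≤ DbarCover f j K :=
  shifted_systems_mono_general f K hinv
end

section
/- Let (X,d), (Y,ρ) be compact metric spaces with nonautonomous systems (X, f_{1,∞}) and (Y, g_{1,∞}), and let π_{1,∞} be an equicontinuous sequence of continuous surjections π_i : X → Y satisfying π_{i+1} ∘ f_i = g_i ∘ π_i for all i ≥ 1. Then for every nonempty K ⊆ X and every s > 0, the Pesin s-entropies satisfy D(g_{1,∞}, π_1(K), s) ≤ D(f_{1,∞}, K, s), and hence D(g_{1,∞}, π_1(K)) ≤ D(f_{1,∞}, K). -/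
open Filter Set Topology
open scoped ENNReal NNReal

/-! The semiconjugacy `π (1 + j) ∘ f_1^j = g_1^j ∘ π 1` sends every string over a cover `𝒱`
of `X` to a string over a cover `𝒰` of `Y` of the same length, covering the image of what the
first one covered, as soon as each `π (1 + j)` maps every member of `𝒱` into a member of `𝒰`.
Equicontinuity together with a Lebesgue number of `𝒰` provides such a `𝒱` of small balls.
Hence `M(g, π_1 K, s, 𝒰, α, N) ≤ M(f, K, s, 𝒱, α, N)`, so the critical value for `𝒰` is
at most the one for `𝒱`, and `D(g, π_1 K, s) ≤ D(f, K, s)`. For the dimensions one also needs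
`D(g, π_1 K, s) ≥ 0`, which holds because a nonempty set cannot be covered at zero cost when
`α < 0`. -/

theorem comps_semiconj {X Y : Type*} {f : ℕ → X → X} {g : ℕ → Y → Y} {π : ℕ → X → Y} {i : ℕ}
    (h : ∀ j, i ≤ j → π (j + 1) ∘ f j = g j ∘ π j) (n : ℕ) :
    π (i + n) ∘ comps f i n = comps g i n ∘ π i := by
  induction n with
  | zero => rfl
  | succ n ih =>
    calc π (i + (n + 1)) ∘ (f (i + n) ∘ comps f i n)
        = (π (i + n + 1) ∘ f (i + n)) ∘ comps f i n := rfl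
      _ = g (i + n) ∘ (π (i + n) ∘ comps f i n) := by rw [h (i + n) (Nat.le_add_right i n)]; rfl
      _ = (g (i + n) ∘ comps g i n) ∘ π i := by rw [ih]; rfl

theorem isFiniteOpenCover_singleton_univ {X : Type*} [TopologicalSpace X] :
    IsFiniteOpenCover ({Set.univ} : Set (Set X)) :=
  ⟨finite_singleton _, by simp, by simp⟩

theorem IsFiniteOpenCover.exists_refinement_of_uniformEquicontinuous {ι X Y : Type*}
    [PseudoMetricSpace X] [CompactSpace X] [PseudoMetricSpace Y] [CompactSpace Y]
    {F : ι → X → Y} (hF : UniformEquicontinuous F) {U : Set (Set Y)} (hU : IsFiniteOpenCover U) :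
    ∃ V : Set (Set X), IsFiniteOpenCover V ∧ ∀ v ∈ V, ∀ i, ∃ u ∈ U, F i '' v ⊆ u := by
  obtain ⟨ε, hε, hleb⟩ :=
    lebesgue_number_lemma_of_metric_sUnion isCompact_univ hU.2.1 hU.2.2.symm.subset
  obtain ⟨δ, hδ, hδε⟩ := Metric.uniformEquicontinuous_iff.1 hF ε hε
  obtain ⟨t, ht⟩ := isCompact_univ.elim_finite_subcover (fun x : X => Metric.ball x (δ / 2))
    (fun _ => Metric.isOpen_ball) fun x _ => mem_iUnion.2 ⟨x, Metric.mem_ball_self (by positivity)⟩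
  refine ⟨(Metric.ball · (δ / 2)) '' t, ⟨t.finite_toSet.image _, ?_, ?_⟩, ?_⟩
  · rintro v ⟨x, -, rfl⟩
    exact Metric.isOpen_ball
  · exact eq_univ_of_univ_subset (by rw [sUnion_image]; exact ht)
  · rintro v ⟨x, -, rfl⟩ i
    obtain ⟨u, hu, hball⟩ := hleb (F i x) (mem_univ _)
    refine ⟨u, hu, ?_⟩
    rintro _ ⟨y, hy, rfl⟩
    exact hball (hδε y x (by linarith [Metric.mem_ball.1 hy]) i)

section Pesin

variable {X Y : Type*} {f : ℕ → X → X} {g : ℕ → Y → Y} {π : ℕ → X → Y}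

def mapString (σ : Set X → ℕ → Set Y) (p : ℕ × (ℕ → Set X)) : ℕ × (ℕ → Set Y) :=
  (p.1, fun j => σ (p.2 j) j)

theorem image_stringSet_subset_mapString
    (hsemi : ∀ n, π (1 + n) ∘ comps f 1 n = comps g 1 n ∘ π 1) {σ : Set X → ℕ → Set Y}
    {p : ℕ × (ℕ → Set X)} (hσ : ∀ j < p.1, π (1 + j) '' p.2 j ⊆ σ (p.2 j) j) :
    π 1 '' stringSet f p ⊆ stringSet g (mapString σ p) := by
  rintro _ ⟨x, hx, rfl⟩
  simp only [stringSet, mem_iInter, Finset.mem_range, mem_preimage, mapString] at hx ⊢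
  intro j hj
  rw [← Function.comp_apply (f := comps g 1 j), ← hsemi j]
  exact hσ j hj (mem_image_of_mem _ (hx j hj))

theorem IsStringCover.image (hsemi : ∀ n, π (1 + n) ∘ comps f 1 n = comps g 1 n ∘ π 1)
    {U : Set (Set Y)} {V : Set (Set X)} {K : Set X} {N : ℕ} {G : Set (ℕ × (ℕ → Set X))}
    (hG : IsStringCover f V K N G) {σ : Set X → ℕ → Set Y}
    (hσ : ∀ v ∈ V, ∀ j, σ v j ∈ U ∧ π (1 + j) '' v ⊆ σ v j) :
    IsStringCover g U (π 1 '' K) N (mapString σ '' G) := by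
  obtain ⟨hGc, hGstr, hGcov⟩ := hG
  refine ⟨hGc.image _, ?_, ?_⟩
  · rintro _ ⟨p, hp, rfl⟩
    exact ⟨(hGstr p hp).1, fun j hj => (hσ _ ((hGstr p hp).2 j hj) j).1⟩
  · calc π 1 '' K ⊆ ⋃ p ∈ G, π 1 '' stringSet f p := by
          simpa only [image_iUnion₂] using image_mono hGcov
      _ ⊆ ⋃ q ∈ mapString σ '' G, stringSet g q := by
          rw [biUnion_image]
          exact iUnion₂_mono fun p hp => image_stringSet_subset_mapString hsemi
            fun j hj => (hσ _ ((hGstr p hp).2 j hj) j).2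

theorem pesinM_image_le (hsemi : ∀ n, π (1 + n) ∘ comps f 1 n = comps g 1 n ∘ π 1)
    {U : Set (Set Y)} {V : Set (Set X)} (hVU : ∀ v ∈ V, ∀ j, ∃ u ∈ U, π (1 + j) '' v ⊆ u)
    (K : Set X) (s α : ℝ) (N : ℕ) :
    pesinM g (π 1 '' K) s U α N ≤ pesinM f K s V α N := by
  have : ∀ v j, ∃ u : Set Y, v ∈ V → u ∈ U ∧ π (1 + j) '' v ⊆ u := by
    intro v j
    by_cases hv : v ∈ V
    · obtain ⟨u, hu, hvu⟩ := hVU v hv j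
      exact ⟨u, fun _ => ⟨hu, hvu⟩⟩
    · exact ⟨∅, fun h => absurd h hv⟩
  choose σ hσ using this
  refine le_sInf ?_
  rintro _ ⟨G, hG, rfl⟩
  refine sInf_le_of_le ⟨_, hG.image hsemi fun v hv j => hσ v j hv, rfl⟩ ?_
  -- strings keep their length under `mapString σ`, so only repetitions can merge terms
  exact ENNReal.tsum_le_tsum_comp_of_surjective
    (f := fun p : G => (⟨mapString σ p, mem_image_of_mem _ p.2⟩ : mapString σ '' G))
    (by rintro ⟨_, p, hp, rfl⟩; exact ⟨⟨p, hp⟩, rfl⟩)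
    fun q => ENNReal.ofReal (Real.exp (-α * (q.1.1 : ℝ) ^ s))

theorem pesinCrit_le_of_pesinOuter_le {K : Set X} {L : Set Y} {s : ℝ} {U : Set (Set Y)}
    {V : Set (Set X)} (h : ∀ α, pesinOuter g L s U α ≤ pesinOuter f K s V α) :
    pesinCrit g L s U ≤ pesinCrit f K s V :=
  sInf_le_sInf <| image_mono fun α hα => le_antisymm ((h α).trans_eq hα) zero_le

theorem one_le_pesinM_zero {K : Set X} (hK : K.Nonempty) (s : ℝ) (U : Set (Set X)) {α : ℝ}
    (hα : α ≤ 0) : 1 ≤ pesinM f K s U α 0 := by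
  refine le_sInf ?_
  rintro _ ⟨G, ⟨-, -, hGcov⟩, rfl⟩
  obtain ⟨p, hp, -⟩ := mem_iUnion₂.1 (hGcov hK.some_mem)
  calc (1 : ℝ≥0∞) ≤ ENNReal.ofReal (Real.exp (-α * (p.1 : ℝ) ^ s)) :=
        ENNReal.one_le_ofReal.2 <| Real.one_le_exp <|
          mul_nonneg (neg_nonneg.2 hα) (Real.rpow_nonneg p.1.cast_nonneg _)
    _ ≤ _ := ENNReal.le_tsum (⟨p, hp⟩ : G)

theorem pesinCrit_nonneg {K : Set X} (hK : K.Nonempty) (s : ℝ) (U : Set (Set X)) :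
    0 ≤ pesinCrit f K s U := by
  refine le_sInf ?_
  rintro _ ⟨α, hα, rfl⟩
  by_contra! hneg
  have h1 : 1 ≤ pesinOuter f K s U α :=
    (one_le_pesinM_zero hK s U (EReal.coe_nonpos.1 hneg.le)).trans (le_iSup _ 0)
  rw [show pesinOuter f K s U α = 0 from hα] at h1
  exact absurd h1 (by simp)

theorem pesinEnt_nonneg [TopologicalSpace X] {K : Set X} (hK : K.Nonempty) (s : ℝ) :
    0 ≤ pesinEnt f K s :=
  (pesinCrit_nonneg hK s _).trans (le_iSup₂_of_le _ isFiniteOpenCover_singleton_univ le_rfl)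

theorem pesinDim_le_of_pesinEnt_le [TopologicalSpace X] [TopologicalSpace Y] {K : Set X}
    {L : Set Y} (hL : L.Nonempty) (h : ∀ s, 0 < s → pesinEnt g L s ≤ pesinEnt f K s) :
    pesinDim g L ≤ pesinDim f K :=
  sInf_le_sInf <| image_mono fun s ⟨hs, hf0⟩ =>
    ⟨hs, le_antisymm ((h s hs).trans hf0.le) (pesinEnt_nonneg hL s)⟩

end Pesin

theorem pesin_equisemiconjugacy_general {X Y : Type*} [MetricSpace X] [CompactSpace X]
    [MetricSpace Y] [CompactSpace Y]
    (f : ℕ → X → X)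
    (g : ℕ → Y → Y)
    (π : ℕ → X → Y)
    (hequi : ∀ ε : ℝ, 0 < ε → ∃ δ : ℝ, 0 < δ ∧ ∀ i, 1 ≤ i → ∀ x y : X,
      dist x y < δ → dist (π i x) (π i y) < ε)
    (hsemi : ∀ i, 1 ≤ i → (π (i + 1)) ∘ f i = g i ∘ π i)
    (K : Set X) (hK : K.Nonempty) :
    (∀ s : ℝ, 0 < s → pesinEnt g (π 1 '' K) s ≤ pesinEnt f K s) ∧
      pesinDim g (π 1 '' K) ≤ pesinDim f K := by
  have hequi' : UniformEquicontinuous fun j : ℕ => π (1 + j) :=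
    Metric.uniformEquicontinuous_iff.2 fun ε hε =>
      let ⟨δ, hδ, h⟩ := hequi ε hε
      ⟨δ, hδ, fun x y hxy j => h (1 + j) (Nat.le_add_right 1 j) x y hxy⟩
  have hent : ∀ s, 0 < s → pesinEnt g (π 1 '' K) s ≤ pesinEnt f K s := by
    refine fun s _ => iSup₂_le fun U hU => ?_
    obtain ⟨V, hV, hVU⟩ := hU.exists_refinement_of_uniformEquicontinuous hequi'
    calc pesinCrit g (π 1 '' K) s U ≤ pesinCrit f K s V :=
          pesinCrit_le_of_pesinOuter_le fun α =>
            iSup_mono fun N => pesinM_image_le (comps_semiconj hsemi) hVU K s α N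
      _ ≤ pesinEnt f K s := le_iSup₂_of_le V hV le_rfl
  exact ⟨hent, pesinDim_le_of_pesinEnt_le (hK.image _) hent⟩

/-- Equisemiconjugacy decreases the Pesin `s`-entropy and the Pesin entropy dimension. -/
theorem pesin_equisemiconjugacy {X Y : Type*} [MetricSpace X] [CompactSpace X]
    [MetricSpace Y] [CompactSpace Y]
    (f : ℕ → X → X) (hf : ∀ i, Continuous (f i))
    (g : ℕ → Y → Y) (hg : ∀ i, Continuous (g i))
    (π : ℕ → X → Y) (hπc : ∀ i, Continuous (π i)) (hπs : ∀ i, Function.Surjective (π i))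
    (hequi : ∀ ε : ℝ, 0 < ε → ∃ δ : ℝ, 0 < δ ∧ ∀ i, 1 ≤ i → ∀ x y : X,
      dist x y < δ → dist (π i x) (π i y) < ε)
    (hsemi : ∀ i, 1 ≤ i → (π (i + 1)) ∘ f i = g i ∘ π i)
    (K : Set X) (hK : K.Nonempty) :
    (∀ s : ℝ, 0 < s → pesinEnt g (π 1 '' K) s ≤ pesinEnt f K s) ∧
      pesinDim g (π 1 '' K) ≤ pesinDim f K :=
  pesin_equisemiconjugacy_general f g π hequi hsemi K hK
end
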